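/- arXiv:1703.04941 — 2 statements merged into one kernel-verified Lean document; each statement's English description precedes it below -/
import Mathlib

section
/- For each natural number n ≥ 5, there exists a minimal deterministic finite automaton A_n with n states over an alphabet of size 5 such that the number of J-classes of the transition semigroup T(A_n) is at least (n−4)^{n−4}; the same lower bound holds for the number of R-classes and the number of L-classes of T(A_n). -/
/-- (Total) transformations on `Q`, with left-to-right composition:
`q·(fg) = (q·f)·g`. -/
def Transf (Q : Type*) : Type _ := Q → Q

instance {Q : Type*} : Mul (Transf Q) := ⟨fun f g => fun q => g (f q)⟩

instance {Q : Type*} : Semigroup (Transf Q) where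
  mul_assoc _ _ _ := rfl

/-- A deterministic finite automaton is minimal if every state is reachable from
the start state and no two distinct states accept the same language. -/
def DFA.IsMinimal {α σ : Type*} (M : DFA α σ) : Prop :=
  (∀ q : σ, ∃ w : List α, M.evalFrom M.start w = q) ∧
  (∀ p q : σ, (∀ w : List α, (M.evalFrom p w ∈ M.accept ↔ M.evalFrom q w ∈ M.accept)) → p = q)

/-- The transition semigroup of a DFA: the transformation semigroup on the state
set generated by the actions of the letters. -/
def transitionSemigroup {α σ : Type*} (M : DFA α σ) : Subsemigroup (Transf σ) :=
  Subsemigroup.closure {f : Transf σ | ∃ a : α, f = fun q => M.step q a}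

section Green
variable {S : Type*} [Semigroup S]

/-- The right ideal `s·S¹` as a subset of `S¹ = WithOne S`. -/
def rIdeal (s : S) : Set (WithOne S) := {x | ∃ z : WithOne S, x = (s : WithOne S) * z}

/-- The left ideal `S¹·s` as a subset of `S¹`. -/
def lIdeal (s : S) : Set (WithOne S) := {x | ∃ z : WithOne S, x = z * (s : WithOne S)}

/-- The two-sided ideal `S¹·s·S¹` as a subset of `S¹`. -/
def jIdeal (s : S) : Set (WithOne S) :=
  {x | ∃ z₁ z₂ : WithOne S, x = z₁ * (s : WithOne S) * z₂}

/-- Green's preorder `s ≤_R t` : `sS¹ ⊆ tS¹`. -/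
def leR (s t : S) : Prop := rIdeal s ⊆ rIdeal t

/-- Green's preorder `s ≤_L t` : `S¹s ⊆ S¹t`. -/
def leL (s t : S) : Prop := lIdeal s ⊆ lIdeal t

/-- Green's preorder `s ≤_J t` : `S¹sS¹ ⊆ S¹tS¹`. -/
def leJ (s t : S) : Prop := jIdeal s ⊆ jIdeal t

/-- Green's strict order `s <_R t`. -/
def ltR (s t : S) : Prop := leR s t ∧ ¬ leR t s

/-- Green's strict order `s <_L t`. -/
def ltL (s t : S) : Prop := leL s t ∧ ¬ leL t s

/-- Green's strict order `s <_J t`. -/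
def ltJ (s t : S) : Prop := leJ s t ∧ ¬ leJ t s

/-- An `R`-chain `(s 0, …, s (ℓ-1))` of length `ℓ`. -/
def IsRChain (ℓ : ℕ) (s : ℕ → S) : Prop := ∀ i : ℕ, i + 1 < ℓ → ltR (s (i + 1)) (s i)

/-- An `L`-chain `(s 0, …, s (ℓ-1))` of length `ℓ`. -/
def IsLChain (ℓ : ℕ) (s : ℕ → S) : Prop := ∀ i : ℕ, i + 1 < ℓ → ltL (s (i + 1)) (s i)

/-- A `J`-chain `(s 0, …, s (ℓ-1))` of length `ℓ`. -/
def IsJChain (ℓ : ℕ) (s : ℕ → S) : Prop := ∀ i : ℕ, i + 1 < ℓ → ltJ (s (i + 1)) (s i)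

end Green

section Green
variable {S : Type*} [Semigroup S]

/-- Green's relation `R`. -/
def eqvR (s t : S) : Prop := leR s t ∧ leR t s

/-- Green's relation `L`. -/
def eqvL (s t : S) : Prop := leL s t ∧ leL t s

/-- Green's relation `J`. -/
def eqvJ (s t : S) : Prop := leJ s t ∧ leJ t s

end Green

/-!
Write `n = (m + 1) + 4`. Three letters act on `m + 1` inner states as a cycle, a transposition
and a collapse of two points, which generate the full transformation monoid. For each of its
`(m + 1) ^ (m + 1)` elements `g`, a word "open, g, close" acts as `g` on the inner states and
sends the start state, which no letter enters, to an accepting extra state, and all other states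
to inner states or the sink. Every letter keeps "inner or sink" and sends that accepting state
to the sink, so a further nonempty factor on either side destroys this image of the start state.
Hence these elements are pairwise `J`-incomparable, and so lie in distinct `J`-, `R`- and
`L`-classes.
-/

open Function Equiv Set Sum

section FullTransformationMonoid

variable {α : Type*} [DecidableEq α]

theorem exists_perm_apply_eq_apply_eq {i j a b : α} (hij : i ≠ j) (hab : a ≠ b) :
    ∃ π : Perm α, π i = a ∧ π j = b := by
  refine ⟨(swap i a).trans (swap (swap i a j) b), ?_, ?_⟩
  · have hj : swap i a j ≠ a := by
      rw [Ne, swap_apply_eq_iff, swap_apply_right]; exact hij.symm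
    simp [swap_apply_of_ne_of_ne hj.symm hab]
  · simp

def collapse (a b : α) : Function.End α := update id a b

theorem collapse_apply (a b x : α) : collapse a b x = if x = a then b else x := by
  by_cases hx : x = a <;> simp [collapse, hx]

variable {M : Submonoid (Function.End α)}

theorem collapse_mem_of_perm_mem (hperm : ∀ π : Perm α, MulAction.toEndHom π ∈ M) {a b : α}
    (hab : a ≠ b) (h : collapse a b ∈ M) (i j : α) : collapse i j ∈ M := by
  rcases eq_or_ne i j with rfl | hij
  · convert M.one_mem using 1; exact update_eq_self i id
  obtain ⟨π, hπi, hπj⟩ := exists_perm_apply_eq_apply_eq hij hab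
  have hconj : collapse i j = MulAction.toEndHom π⁻¹ * collapse a b * MulAction.toEndHom π := by
    funext x
    show collapse i j x = π⁻¹ (collapse a b (π x))
    rcases eq_or_ne x i with rfl | hx
    · simp [collapse_apply, hπi, ← hπj]
    · have : π x ≠ a := hπi ▸ π.injective.ne hx
      simp [collapse_apply, hx, this]
  rw [hconj]
  exact M.mul_mem (M.mul_mem (hperm _) h) (hperm _)

variable [Fintype α]

/-- Induction on the number of points missed by `g`: a non-injective `g` with `g i = g j`
factors as `collapse j i` followed by a map hitting one more point. -/
theorem mem_of_perm_mem_of_collapse_mem (hperm : ∀ π : Perm α, MulAction.toEndHom π ∈ M)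
    (hcollapse : ∀ i j : α, collapse i j ∈ M) (g : α → α) : g ∈ M := by
  by_cases hg : Injective g
  · exact hperm (Equiv.ofBijective g (Finite.injective_iff_bijective.mp hg))
  obtain ⟨i, j, hgij, hij⟩ := not_injective_iff.mp hg
  obtain ⟨c, hc⟩ : ∃ c, ∀ x, g x ≠ c := by
    simpa [Surjective] using fun hs => hg (Finite.injective_iff_surjective.mpr hs)
  have hfactor : g = update g j c ∘ collapse j i := by
    funext x
    show g x = update g j c (collapse j i x)
    rcases eq_or_ne x j with rfl | hx
    · simp [collapse_apply, hgij, hij]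
    · simp [collapse_apply, hx]
  have hlt : (Finset.univ.image g).card < (Finset.univ.image (update g j c)).card := by
    refine Finset.card_lt_card ((Finset.ssubset_iff_of_subset ?_).mpr ⟨c, ?_, ?_⟩)
    · intro y hy
      obtain ⟨x, -, rfl⟩ := Finset.mem_image.mp hy
      rcases eq_or_ne x j with rfl | hx
      · exact Finset.mem_image.mpr ⟨i, Finset.mem_univ _, by simp [hij, hgij]⟩
      · exact Finset.mem_image.mpr ⟨x, Finset.mem_univ _, by simp [hx]⟩
    · exact Finset.mem_image.mpr ⟨j, Finset.mem_univ _, by simp⟩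
    · simpa using hc
  have := M.mul_mem (mem_of_perm_mem_of_collapse_mem hperm hcollapse (update g j c))
    (hcollapse j i)
  rwa [hfactor]
termination_by Fintype.card α - (Finset.univ.image g).card
decreasing_by
  have := Finset.card_le_univ (Finset.univ.image (update g j c))
  omega

end FullTransformationMonoid

theorem Fin.mem_of_finRotate_swap_collapse_mem {m : ℕ} {M : Submonoid (Function.End (Fin (m + 1)))}
    (hrot : MulAction.toEndHom (finRotate (m + 1)) ∈ M)
    (hswap : MulAction.toEndHom (swap (0 : Fin (m + 1)) 1) ∈ M)
    (hcollapse : collapse (0 : Fin (m + 1)) 1 ∈ M) (g : Fin (m + 1) → Fin (m + 1)) : g ∈ M := by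
  rcases m with _ | k
  · obtain rfl : g = id := funext fun x => Subsingleton.elim (α := Fin 1) _ _
    exact M.one_mem
  have hperm : ∀ π : Perm (Fin (k + 2)), MulAction.toEndHom π ∈ M := by
    intro π
    have hgen : Subgroup.closure {finRotate (k + 2), swap 0 (finRotate (k + 2) 0)} = ⊤ :=
      Perm.closure_cycle_adjacent_swap isCycle_finRotate support_finRotate 0
    rw [finRotate_apply, zero_add, ← Subgroup.toSubmonoid_inj,
      Subgroup.closure_toSubmonoid_of_finite] at hgen
    have hπ : π ∈ Submonoid.closure {finRotate (k + 2), swap 0 1} := by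
      rw [hgen]; trivial
    induction hπ using Submonoid.closure_induction with
    | mem σ hσ =>
      rcases hσ with rfl | rfl
      · exact hrot
      · exact hswap
    | one => rw [map_one]; exact M.one_mem
    | mul σ τ _ _ hσ hτ => rw [map_mul]; exact M.mul_mem hσ hτ
  exact mem_of_perm_mem_of_collapse_mem hperm
    (collapse_mem_of_perm_mem hperm (by simp) hcollapse) g

section Green

variable {S T : Type*} [Semigroup S] [Semigroup T] {s t : S}

theorem leJ_iff_mem_jIdeal : leJ s t ↔ (s : WithOne S) ∈ jIdeal t := by
  refine ⟨fun h => h ⟨1, 1, by simp⟩, ?_⟩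
  rintro ⟨z₁, z₂, hz⟩ x ⟨y₁, y₂, rfl⟩
  exact ⟨y₁ * z₁, z₂ * y₂, by simp only [hz, mul_assoc]⟩

theorem leR.leJ (h : leR s t) : leJ s t := by
  obtain ⟨z, hz⟩ := h ⟨1, (mul_one _).symm⟩
  exact leJ_iff_mem_jIdeal.mpr ⟨1, z, by rw [hz, one_mul]⟩

theorem leL.leJ (h : leL s t) : leJ s t := by
  obtain ⟨z, hz⟩ := h ⟨1, (one_mul _).symm⟩
  exact leJ_iff_mem_jIdeal.mpr ⟨z, 1, by rw [hz, mul_one]⟩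

theorem leJ.map (f : S →ₙ* T) (h : leJ s t) : leJ (f s) (f t) := by
  obtain ⟨z₁, z₂, hz⟩ := leJ_iff_mem_jIdeal.mp h
  refine leJ_iff_mem_jIdeal.mpr ⟨WithOne.mapMulHom f z₁, WithOne.mapMulHom f z₂, ?_⟩
  simpa using congrArg (WithOne.mapMulHom f) hz

def IsJAntichain {ι : Type*} (f : ι → S) : Prop := ∀ i j, leJ (f i) (f j) → i = j

theorem IsJAntichain.comp {ι κ : Type*} {f : ι → S} (hf : IsJAntichain f) {g : κ → ι}
    (hg : Injective g) : IsJAntichain (f ∘ g) :=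
  fun _ _ h => hg (hf _ _ h)

theorem IsJAntichain.map {ι : Type*} {f : ι → S} (hf : IsJAntichain f) (φ : S ≃* T) :
    IsJAntichain (φ ∘ f) :=
  fun i j h => hf i j (by simpa using h.map φ.symm.toMulHom)

end Green

namespace Transf

variable {σ τ : Type*}

@[simp]
theorem mul_apply (f g : Transf σ) (q : σ) : (f * g) q = g (f q) := rfl

def confining (γ β : σ) (C : Set σ) : Subsemigroup (Transf σ) where
  carrier := {u | (∀ q, u q ≠ γ) ∧ MapsTo u (insert β C) C}
  mul_mem' {u _} hu hv := ⟨fun q => hv.1 (u q), fun _ hq => hv.2 (mem_insert_of_mem _ (hu.2 hq))⟩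

/-- The point `γ` separates `s` from the rest of the ideal `S¹tS¹`: a proper factor on the
left moves `γ` off itself, where `t` lands in `C`; a proper factor on the right is applied to
`t γ = β`; and neither way leads out of `C`, unlike `s γ`. -/
theorem eq_of_leJ_of_le_confining {S : Subsemigroup (Transf σ)} {γ β : σ} {C : Set σ}
    (hS : S ≤ confining γ β C) {s t : S} (hs : (s : Transf σ) γ ∉ C) (ht : (t : Transf σ) γ = β)
    (htC : MapsTo (t : Transf σ) {γ}ᶜ C) (hst : leJ s t) : s = t := by
  have hne (u : S) : (u : Transf σ) γ ≠ γ := (hS u.2).1 γ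
  have hmaps (u : S) : MapsTo (u : Transf σ) (insert β C) C := (hS u.2).2
  obtain ⟨z₁, z₂, hz⟩ := leJ_iff_mem_jIdeal.mp hst
  induction z₁ using WithOne.recOneCoe <;> induction z₂ using WithOne.recOneCoe <;>
    simp only [one_mul, mul_one, ← WithOne.coe_mul, WithOne.coe_inj] at hz <;> subst hz
  case one.one => rfl
  case one.coe v => exact (hs (by simpa [ht] using hmaps v (mem_insert β C))).elim
  case coe.one u => exact (hs (by simpa using htC (hne u))).elim
  case coe.coe u v =>
    exact (hs (by simpa using hmaps v (mem_insert_of_mem _ (htC (hne u))))).elim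

def conjEquiv (e : σ ≃ τ) : Transf σ ≃* Transf τ where
  toFun f q := e (f (e.symm q))
  invFun f q := e.symm (f (e q))
  left_inv f := by funext q; simp
  right_inv f := by funext q; simp
  map_mul' f g := by
    funext q
    show e (g (f (e.symm q))) = e (g (e.symm (e (f (e.symm q)))))
    simp

end Transf

section Reindex

variable {α σ τ : Type*} (e : σ ≃ τ) (M : DFA α σ)

theorem transitionSemigroup_reindex :
    transitionSemigroup (DFA.reindex e M) =
      (transitionSemigroup M).map (Transf.conjEquiv e : Transf σ →ₙ* Transf τ) := by
  rw [transitionSemigroup, transitionSemigroup, MulHom.map_mclosure]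
  congr 1
  ext f
  simp only [mem_ofPred_eq, mem_image]
  constructor
  · rintro ⟨a, rfl⟩
    exact ⟨fun q => M.step q a, ⟨a, rfl⟩, rfl⟩
  · rintro ⟨_, ⟨a, rfl⟩, rfl⟩
    exact ⟨a, rfl⟩

def transitionSemigroupReindexEquiv :
    transitionSemigroup M ≃* transitionSemigroup (DFA.reindex e M) :=
  (MulEquiv.subsemigroupMap (Transf.conjEquiv e) _).trans
    (MulEquiv.subsemigroupCongr (transitionSemigroup_reindex e M).symm)

theorem DFA.IsMinimal.reindex {M : DFA α σ} (hM : M.IsMinimal) : (DFA.reindex e M).IsMinimal := by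
  refine ⟨fun q => ?_, fun p q h => ?_⟩
  · obtain ⟨w, hw⟩ := hM.1 (e.symm q)
    exact ⟨w, by simp [hw]⟩
  · refine e.symm.injective (hM.2 _ _ fun w => ?_)
    simpa using h w

end Reindex

theorem DFA.evalFrom_replicate_of_step_eq_self {α σ : Type*} {M : DFA α σ} {s : σ} {a : α}
    (h : M.step s a = s) (k : ℕ) : M.evalFrom s (List.replicate k a) = s := by
  induction k with
  | zero => rfl
  | succ k ih => rwa [List.replicate_succ, DFA.evalFrom_cons, h]

namespace witnessDFA

variable (m : ℕ)

/- Besides the states `inl i` of the inner copy of `Fin (m + 1)`, there are four extra states: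
`inr 2` is the start state, which no letter enters; `inr 0` is reached from it by `openT`;
`inr 1` is the accepting state `closeT` leads to from `inr 0`; `inr 3` is a sink. -/

def openT : Transf (Fin (m + 1) ⊕ Fin 4) := Sum.elim inl ![inr 3, inr 3, inr 0, inr 3]

variable {m} in
def liftT (g : Function.End (Fin (m + 1))) : Transf (Fin (m + 1) ⊕ Fin 4) :=
  Sum.elim (fun i => inl (g i)) ![inr 0, inr 3, inr 3, inr 3]

def closeT : Transf (Fin (m + 1) ⊕ Fin 4) := Sum.elim inl ![inr 1, inr 3, inl 0, inr 3]

def letter : Fin 5 → Transf (Fin (m + 1) ⊕ Fin 4) :=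
  ![openT m, liftT (MulAction.toEndHom (finRotate (m + 1))),
    liftT (MulAction.toEndHom (Equiv.swap (0 : Fin (m + 1)) 1)), liftT (collapse 0 1), closeT m]

end witnessDFA

open witnessDFA in
def witnessDFA (m : ℕ) : DFA (Fin 5) (Fin (m + 1) ⊕ Fin 4) where
  step q a := letter m a q
  start := inr 2
  accept := {inl 0, inr 1}

namespace witnessDFA

variable {m : ℕ}

theorem liftT_mul (x y : Function.End (Fin (m + 1))) : liftT (x * y) = liftT y * liftT x := by
  funext q
  rcases q with i | c
  · rfl
  · fin_cases c <;> rfl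

theorem openT_mul_liftT_one : openT m * liftT 1 = openT m := by
  funext q
  rcases q with i | c
  · rfl
  · fin_cases c <;> rfl

theorem letter_mem (a : Fin 5) : letter m a ∈ transitionSemigroup (witnessDFA m) :=
  Subsemigroup.subset_closure ⟨a, rfl⟩

variable (m) in
def bracket (g : Function.End (Fin (m + 1))) : Transf (Fin (m + 1) ⊕ Fin 4) :=
  openT m * liftT g * closeT m

theorem bracket_mem (g : Function.End (Fin (m + 1))) :
    bracket m g ∈ transitionSemigroup (witnessDFA m) := by
  set M := Submonoid.closure ({MulAction.toEndHom (finRotate (m + 1)),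
    MulAction.toEndHom (Equiv.swap (0 : Fin (m + 1)) 1), collapse 0 1} :
      Set (Function.End (Fin (m + 1))))
  have hg : g ∈ M := Fin.mem_of_finRotate_swap_collapse_mem (Submonoid.subset_closure (by simp))
    (Submonoid.subset_closure (by simp)) (Submonoid.subset_closure (by simp)) g
  have hopen : openT m * liftT g ∈ transitionSemigroup (witnessDFA m) := by
    induction hg using Submonoid.closure_induction_left with
    | one => rw [openT_mul_liftT_one]; exact letter_mem (m := m) 0
    | mul_left x hx y _ ih =>
      rw [liftT_mul, ← mul_assoc]
      refine mul_mem ih ?_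
      rcases hx with rfl | rfl | rfl
      exacts [letter_mem (m := m) 1, letter_mem (m := m) 2, letter_mem (m := m) 3]
  exact mul_mem hopen (letter_mem (m := m) 4)

variable (m) in
abbrev trapSet : Set (Fin (m + 1) ⊕ Fin 4) := insert (inr 3) (Set.range inl)

theorem elim_mem_confining {f : Fin (m + 1) → Fin (m + 1)} {v : Fin 4 → Fin (m + 1) ⊕ Fin 4}
    (hv : ∀ c, v c ≠ inr 2) (hv1 : v 1 = inr 3) (hv3 : v 3 = inr 3) :
    Sum.elim (fun i => inl (f i)) v ∈ Transf.confining (inr 2) (inr 1) (trapSet m) := by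
  refine ⟨fun q => ?_, ?_⟩
  · rcases q with i | c
    exacts [inl_ne_inr, hv c]
  · rintro q (rfl | rfl | ⟨i, rfl⟩)
    · exact Or.inl hv1
    · exact Or.inl hv3
    · exact Or.inr ⟨f i, rfl⟩

theorem transitionSemigroup_le_confining :
    transitionSemigroup (witnessDFA m) ≤ Transf.confining (inr 2) (inr 1) (trapSet m) := by
  refine (Subsemigroup.closure_le).mpr ?_
  rintro _ ⟨a, rfl⟩
  fin_cases a <;> exact elim_mem_confining (fun c => by fin_cases c <;> simp) rfl rfl

theorem bracket_apply_start (g : Function.End (Fin (m + 1))) : bracket m g (inr 2) = inr 1 := rfl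

theorem mapsTo_bracket (g : Function.End (Fin (m + 1))) :
    Set.MapsTo (bracket m g) {inr 2}ᶜ (trapSet m) := by
  rintro (i | c) hq
  · exact Or.inr ⟨g i, rfl⟩
  · fin_cases c
    exacts [Or.inl rfl, Or.inl rfl, absurd rfl hq, Or.inl rfl]

theorem bracket_injective : Function.Injective (bracket m) := fun _ _ hgh =>
  funext fun i => inl_injective (congrFun hgh (inl i))

theorem isJAntichain_bracket :
    IsJAntichain fun g : Function.End (Fin (m + 1)) =>
      (⟨bracket m g, bracket_mem g⟩ : transitionSemigroup (witnessDFA m)) :=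
  fun _ h hgh => bracket_injective (congrArg Subtype.val
    (Transf.eq_of_leJ_of_le_confining transitionSemigroup_le_confining
      (by simp [bracket_apply_start]) rfl (mapsTo_bracket h) hgh))

open Fin.NatCast

theorem inl_mem_accept_iff (i : Fin (m + 1)) : inl i ∈ (witnessDFA m).accept ↔ i = 0 := by
  simp [witnessDFA]

theorem evalFrom_inl_replicate (i : Fin (m + 1)) (k : ℕ) :
    (witnessDFA m).evalFrom (inl i) (List.replicate k 1) = inl (i + (k : Fin (m + 1))) := by
  induction k generalizing i with
  | zero => simp
  | succ k ih =>
    have hstep : (witnessDFA m).step (inl i) 1 = inl (i + 1) := congrArg inl (finRotate_apply i)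
    rw [List.replicate_succ, DFA.evalFrom_cons, hstep, ih, Nat.cast_succ, add_assoc, add_comm 1]

theorem evalFrom_inr_replicate_succ_notMem_accept (c : Fin 4) (k : ℕ) :
    (witnessDFA m).evalFrom (inr c) (List.replicate (k + 1) 1) ∉ (witnessDFA m).accept := by
  rw [List.replicate_succ, DFA.evalFrom_cons]
  fin_cases c <;> rw [DFA.evalFrom_replicate_of_step_eq_self rfl] <;>
    simp [witnessDFA, letter, liftT]

/-- Reading `1` rotates the inner states and sends the extra ones into the non-accepting
states `inr 0` and `inr 3`, which it fixes. -/
theorem mem_accept_replicate_iff (i : Fin (m + 1)) (q : Fin (m + 1) ⊕ Fin 4) :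
    (witnessDFA m).evalFrom q (List.replicate ((-i).val + m + 1) 1) ∈ (witnessDFA m).accept ↔
      q = inl i := by
  rcases q with j | c
  · have hcast : (↑((-i).val + m + 1) : Fin (m + 1)) = -i := by
      rw [add_assoc, Nat.cast_add, Fin.natCast_self, add_zero, Fin.cast_val_eq_self]
    rw [evalFrom_inl_replicate, inl_mem_accept_iff, hcast, ← sub_eq_add_neg, sub_eq_zero, inl.injEq]
  · simpa using evalFrom_inr_replicate_succ_notMem_accept c _

theorem exists_evalFrom_start_eq (q : Fin (m + 1) ⊕ Fin 4) :
    ∃ w, (witnessDFA m).evalFrom (witnessDFA m).start w = q := by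
  rcases q with i | c
  · refine ⟨4 :: List.replicate i.val 1, ?_⟩
    show (witnessDFA m).evalFrom (inl 0) _ = _
    rw [evalFrom_inl_replicate, zero_add, Fin.cast_val_eq_self]
  · fin_cases c
    exacts [⟨[0], rfl⟩, ⟨[0, 4], rfl⟩, ⟨[], rfl⟩, ⟨[0, 0], rfl⟩]

theorem eq_of_forall_mem_accept_iff {p q : Fin (m + 1) ⊕ Fin 4}
    (h : ∀ w, (witnessDFA m).evalFrom p w ∈ (witnessDFA m).accept ↔
      (witnessDFA m).evalFrom q w ∈ (witnessDFA m).accept) : p = q := by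
  rcases p with i | c
  · exact ((mem_accept_replicate_iff i q).mp
      ((h _).mp ((mem_accept_replicate_iff i _).mpr rfl))).symm
  rcases q with j | c'
  · exact (mem_accept_replicate_iff j _).mp ((h _).mpr ((mem_accept_replicate_iff j _).mpr rfl))
  have h₀ := h []
  have h₄ := h [4]
  have h₀₄ := h [0, 4]
  fin_cases c <;> fin_cases c' <;> simp_all [witnessDFA, letter, openT, liftT, closeT]

theorem isMinimal : (witnessDFA m).IsMinimal :=
  ⟨exists_evalFrom_start_eq, fun _ _ => eq_of_forall_mem_accept_iff⟩

end witnessDFA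

/-- For each `n ≥ 5` there is a minimal DFA with `n` states
over an alphabet of size `5` whose transition semigroup has at least
`(n-4)^(n-4)` pairwise distinct `J`-classes, and likewise at least
`(n-4)^(n-4)` `R`-classes and `L`-classes (witnessed by families of pairwise
non-equivalent elements). -/
theorem many_classes_minimal_automaton (n : ℕ) (hn : 5 ≤ n) :
    ∃ M : DFA (Fin 5) (Fin n), M.IsMinimal ∧
      (∃ f : Fin ((n - 4) ^ (n - 4)) → ↥(transitionSemigroup M),
        ∀ i j, eqvJ (f i) (f j) → i = j) ∧
      (∃ f : Fin ((n - 4) ^ (n - 4)) → ↥(transitionSemigroup M),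
        ∀ i j, eqvR (f i) (f j) → i = j) ∧
      (∃ f : Fin ((n - 4) ^ (n - 4)) → ↥(transitionSemigroup M),
        ∀ i j, eqvL (f i) (f j) → i = j) := by
  obtain ⟨m, rfl⟩ : ∃ m, n = m + 5 := ⟨n - 5, by omega⟩
  have hcard : Fintype.card (Fin (m + 1) → Fin (m + 1)) = (m + 5 - 4) ^ (m + 5 - 4) := by simp
  let e : Fin (m + 1) ⊕ Fin 4 ≃ Fin (m + 5) := finSumFinEquiv.trans (finCongr (by omega))
  have hf := (witnessDFA.isJAntichain_bracket.comp
    (Fintype.equivFinOfCardEq hcard).symm.injective).map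
      (transitionSemigroupReindexEquiv e (witnessDFA m))
  exact ⟨DFA.reindex e (witnessDFA m), witnessDFA.isMinimal.reindex e, ⟨_, fun i j h => hf i j h.1⟩,
    ⟨_, fun i j h => hf i j h.1.leJ⟩, ⟨_, fun i j h => hf i j h.1.leJ⟩⟩
end

section
/- Let N be an n-bit binary counter with instruction set I. Each of the regular languages L_reset = ι_sync ((ι_{=0} | ι_dec) ι_rotr ι_off)* (ι_{=0} | ι_dec) ι_rotr ι_sync, L_inc = ι_sync (ι_dec ι_rotr ι_off)* ι_inc (ι_off ι_rotr)* ι_sync, and L_dec = ι_sync (ι_inc ι_rotr ι_off)* ι_dec (ι_off ι_rotr)* ι_sync over I is deterministic on every valid configuration R of N; that is, for all u₁, u₂ in the language with |R·u₁| = |R| = |R·u₂|, one has u₁ = u₂. -/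
/-!
A valid configuration is determined by the position `p` of its `S`-token and its bit vector
`b`. Every instruction either maps such a configuration bijectively onto another valid one, or
is undefined on one of its cells; since a partial transformation never increases cardinality,
a lost cell is lost for good. Hence a word preserves `|R|` exactly when each of its letters is
enabled at the configuration reached so far. Wherever two words of one of the three languages
can first differ, the two candidate letters are `ι_{=0}` / `ι_dec` (enabled iff `c₀ ∉ R`,
resp. `c₀ ∈ R`), `ι_dec` / `ι_inc` (likewise) or `ι_off` / `ι_sync` (enabled iff the token is
off `d₀`, resp. on it), and never both enabled; so two such words coincide.
-/

/-- Partial transformations on `Q` (partial functions `Q → Q`), with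
left-to-right composition: `q·(fg) = (q·f)·g`. -/
def PTrans (Q : Type*) : Type _ := Q → Option Q

/-- The image `R·f` of a configuration `R` under a partial transformation `f`. -/
def pApply {Q : Type*} (R : Set Q) (f : PTrans Q) : Set Q :=
  {q' | ∃ q ∈ R, f q = some q'}

/-- The image `R·u` of a configuration under a word of partial transformations. -/
def wordApply {Q : Type*} (R : Set Q) (u : List (PTrans Q)) : Set Q :=
  u.foldl pApply R

/-! ### The `n`-bit binary counter
Cells: `(0, i) = dᵢ` (tape `S`), `(1, i) = cᵢ` (tape `T`), `(2, i) = c̄ᵢ`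
(tape `T̄`). -/

variable (n : ℕ) [NeZero n]

/-- The cell `dᵢ` of the tape `S`. -/
def dCell (i : Fin n) : Fin 3 × Fin n := (0, i)

/-- The cell `cᵢ` of the tape `T`. -/
def cCell (i : Fin n) : Fin 3 × Fin n := (1, i)

/-- The cell `c̄ᵢ` of the tape `T̄`. -/
def cbarCell (i : Fin n) : Fin 3 × Fin n := (2, i)

/-- `ι_rotl` : cyclic left rotation on all three tapes. -/
def rotl : PTrans (Fin 3 × Fin n) := fun x => some (x.1, x.2 + 1)

/-- `ι_rotr` : cyclic right rotation on all three tapes. -/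
def rotr : PTrans (Fin 3 × Fin n) := fun x => some (x.1, x.2 - 1)

/-- `ι_{=0}` : undefined on `c₀`, identity on all other cells. -/
def eqz : PTrans (Fin 3 × Fin n) := fun x => if x = cCell n 0 then none else some x

/-- `ι_{=1}` : undefined on `c̄₀`, identity on all other cells. -/
def eqo : PTrans (Fin 3 × Fin n) := fun x => if x = cbarCell n 0 then none else some x

/-- `ι_sync` : undefined on `d₁, …, d_{n-1}`, identity on all other cells. -/
def syncI : PTrans (Fin 3 × Fin n) :=
  fun x => if x.1 = 0 ∧ x.2 ≠ 0 then none else some x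

/-- `ι_off` : undefined on `d₀`, identity on all other cells. -/
def offI : PTrans (Fin 3 × Fin n) := fun x => if x = dCell n 0 then none else some x

/-- `ι_inc` : maps `c̄₀` to `c₀`, undefined on `c₀`, identity elsewhere. -/
def incI : PTrans (Fin 3 × Fin n) :=
  fun x => if x = cbarCell n 0 then some (cCell n 0)
    else if x = cCell n 0 then none else some x

/-- `ι_dec` : maps `c₀` to `c̄₀`, undefined on `c̄₀`, identity elsewhere. -/
def decI : PTrans (Fin 3 × Fin n) :=
  fun x => if x = cCell n 0 then some (cbarCell n 0)
    else if x = cbarCell n 0 then none else some x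

/-- The instruction set of the `n`-bit binary counter. -/
def counterI : Set (PTrans (Fin 3 × Fin n)) :=
  {rotl n, rotr n, eqz n, eqo n, syncI n, offI n, incI n, decI n}

/-- A configuration is valid if it contains exactly one cell of the tape `S` and,
for each `i`, exactly one of `cᵢ`, `c̄ᵢ`. -/
def ValidConf (R : Set (Fin 3 × Fin n)) : Prop :=
  (∃! i : Fin n, dCell n i ∈ R) ∧ ∀ i : Fin n, (cCell n i ∈ R ↔ cbarCell n i ∉ R)

open Classical in
/-- The value of the counter under a configuration `R`: `Σ_{i : cᵢ ∈ R} 2^i`. -/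
noncomputable def counterValue (R : Set (Fin 3 × Fin n)) : ℕ :=
  ∑ i : Fin n, if cCell n i ∈ R then 2 ^ (i : ℕ) else 0

/-- Membership in the regular language
`L_reset = ι_sync ((ι_{=0} | ι_dec) ι_rotr ι_off)* (ι_{=0} | ι_dec) ι_rotr ι_sync`. -/
def memLreset (u : List (PTrans (Fin 3 × Fin n))) : Prop :=
  ∃ (bs : List (PTrans (Fin 3 × Fin n))) (b : PTrans (Fin 3 × Fin n)),
    (∀ x ∈ bs, x = eqz n ∨ x = decI n) ∧ (b = eqz n ∨ b = decI n) ∧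
    u = syncI n ::
      ((bs.map fun x => [x, rotr n, offI n]).flatten ++ [b, rotr n, syncI n])

/-- Membership in the regular language
`L_inc = ι_sync (ι_dec ι_rotr ι_off)* ι_inc (ι_off ι_rotr)* ι_sync`. -/
def memLinc (u : List (PTrans (Fin 3 × Fin n))) : Prop :=
  ∃ k m : ℕ,
    u = syncI n ::
      ((List.replicate k [decI n, rotr n, offI n]).flatten ++
        incI n :: ((List.replicate m [offI n, rotr n]).flatten ++ [syncI n]))

/-- Membership in the regular language
`L_dec = ι_sync (ι_inc ι_rotr ι_off)* ι_dec (ι_off ι_rotr)* ι_sync`. -/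
def memLdec (u : List (PTrans (Fin 3 × Fin n))) : Prop :=
  ∃ k m : ℕ,
    u = syncI n ::
      ((List.replicate k [incI n, rotr n, offI n]).flatten ++
        decI n :: ((List.replicate m [offI n, rotr n]).flatten ++ [syncI n]))

section PartialTransformations

variable {Q : Type*} {R R' : Set Q} {f : PTrans Q} {u : List (PTrans Q)}

def PreservesCard (R : Set Q) (u : List (PTrans Q)) : Prop :=
  (wordApply R u).ncard = R.ncard

lemma pApply_eq_image {g : Q → Q} (h : ∀ q ∈ R, f q = some (g q)) : pApply R f = g '' R := by
  ext q'
  simp only [pApply, Set.mem_ofPred_eq, Set.mem_image]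
  exact exists_congr fun q => and_congr_right fun hq => by rw [h q hq, Option.some_inj]

lemma pApply_eq_self (h : ∀ q ∈ R, f q = some q) : pApply R f = R := by
  rw [pApply_eq_image (g := id) h, Set.image_id]

lemma ncard_pApply_le [Finite Q] (R : Set Q) (f : PTrans Q) : (pApply R f).ncard ≤ R.ncard :=
  calc (pApply R f).ncard = (Option.some '' pApply R f).ncard :=
        (Set.ncard_image_of_injective _ (Option.some_injective Q)).symm
    _ ≤ (f '' R).ncard := Set.ncard_le_ncard (by rintro _ ⟨q', ⟨q, hq, hf⟩, rfl⟩; exact ⟨q, hq, hf⟩)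
    _ ≤ R.ncard := Set.ncard_image_le

lemma ncard_wordApply_le [Finite Q] (R : Set Q) (u : List (PTrans Q)) :
    (wordApply R u).ncard ≤ R.ncard := by
  induction u generalizing R with
  | nil => exact le_rfl
  | cons f u ih => exact (ih (pApply R f)).trans (ncard_pApply_le R f)

lemma ncard_pApply_lt [Finite Q] {q : Q} (hq : q ∈ R) (hf : f q = none) :
    (pApply R f).ncard < R.ncard := by
  have hR : pApply R f = pApply (R \ {q}) f := by
    ext q'
    refine ⟨fun ⟨r, hr, hfr⟩ => ⟨r, ⟨hr, ?_⟩, hfr⟩, fun ⟨r, hr, hfr⟩ => ⟨r, hr.1, hfr⟩⟩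
    rintro rfl
    simp [hf] at hfr
  rw [hR]
  exact (ncard_pApply_le _ f).trans_lt (Set.ncard_sdiff_singleton_lt_of_mem hq)

lemma preservesCard_cons_iff [Finite Q] :
    PreservesCard R (f :: u) ↔ (pApply R f).ncard = R.ncard ∧ PreservesCard (pApply R f) u := by
  constructor
  · intro h
    change (wordApply (pApply R f) u).ncard = R.ncard at h
    have := ncard_wordApply_le (pApply R f) u
    have := ncard_pApply_le R f
    exact ⟨by omega, by unfold PreservesCard; omega⟩
  · rintro ⟨hf, hu⟩
    exact hu.trans hf

lemma PreservesCard.of_cons [Finite Q] {P : Prop} (h : PreservesCard R (f :: u))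
    (hdead : ¬P → ∃ q ∈ R, f q = none) (himg : P → pApply R f = R') :
    P ∧ PreservesCard R' u := by
  obtain ⟨hf, hu⟩ := preservesCard_cons_iff.1 h
  have hP : P := by
    by_contra hP
    obtain ⟨q, hq, hfq⟩ := hdead hP
    exact (ncard_pApply_lt hq hfq).ne hf
  exact ⟨hP, himg hP ▸ hu⟩

end PartialTransformations

def conf (p : Fin n) (b : Fin n → Bool) : Set (Fin 3 × Fin n) :=
  {x | (x.1 = 0 ∧ x.2 = p) ∨ (x.1 = 1 ∧ b x.2 = true) ∨ (x.1 = 2 ∧ b x.2 = false)}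

section Configurations

-- shadows the ambient `n`, so that its `[NeZero n]` is not pulled into these lemmas
variable {n : ℕ}

@[simp]
lemma mem_conf {p : Fin n} {b : Fin n → Bool} {x : Fin 3 × Fin n} :
    x ∈ conf n p b ↔
      (x.1 = 0 ∧ x.2 = p) ∨ (x.1 = 1 ∧ b x.2 = true) ∨ (x.1 = 2 ∧ b x.2 = false) :=
  Iff.rfl

lemma exists_conf_eq {R : Set (Fin 3 × Fin n)} (hR : ValidConf n R) : ∃ p b, R = conf n p b := by
  classical
  obtain ⟨⟨p, hp, hup⟩, hc⟩ := hR
  refine ⟨p, fun i => decide (cCell n i ∈ R), ?_⟩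
  ext ⟨t, j⟩
  have := hc j
  fin_cases t
  · simpa using ⟨hup j, fun h => h ▸ hp⟩
  all_goals simp_all [cCell, cbarCell]

end Configurations

/-- On a valid configuration, `setBit n β` sets bit `0` to `β` and loses a cell unless that
bit was `!β`. -/
def setBit : Bool → PTrans (Fin 3 × Fin n)
  | true => incI n
  | false => decI n

def offRotrTail (m : ℕ) : List (PTrans (Fin 3 × Fin n)) :=
  (List.replicate m [offI n, rotr n]).flatten ++ [syncI n]

/-- `memLinc n u ↔ ∃ k m, u = syncI n :: setBitTail n true k m`, and `false` gives `memLdec`. -/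
def setBitTail (β : Bool) (k m : ℕ) : List (PTrans (Fin 3 × Fin n)) :=
  (List.replicate k [setBit n (!β), rotr n, offI n]).flatten ++ setBit n β :: offRotrTail n m

def resetTail (bs : List (PTrans (Fin 3 × Fin n))) (e : PTrans (Fin 3 × Fin n)) :
    List (PTrans (Fin 3 × Fin n)) :=
  (bs.map fun x => [x, rotr n, offI n]).flatten ++ [e, rotr n, syncI n]

section Counter

variable {n : ℕ} [NeZero n] {p : Fin n} {b : Fin n → Bool} {u : List (PTrans (Fin 3 × Fin n))}

lemma pApply_rotr_conf :
    pApply (conf n p b) (rotr n) = conf n (p - 1) (fun i => b (i + 1)) := by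
  rw [pApply_eq_image (f := rotr n) (g := fun x => (x.1, x.2 - 1)) fun _ _ => rfl]
  ext ⟨t, j⟩
  simp only [Set.mem_image, mem_conf, Prod.exists, Prod.mk.injEq]
  constructor
  · rintro ⟨s, i, h, rfl, rfl⟩
    simpa using h
  · intro h
    exact ⟨t, j + 1, by simpa [eq_sub_iff_add_eq] using h, rfl, by simp⟩

lemma image_swap_conf :
    Equiv.swap (1, 0) (2, 0) '' conf n p b = conf n p (Function.update b 0 (!b 0)) := by
  ext ⟨t, j⟩
  rw [Equiv.image_eq_preimage_symm, Equiv.symm_swap]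
  by_cases hj : j = 0
  · subst hj
    cases hb : b 0 <;> fin_cases t <;> simp [Equiv.swap_apply_def, hb]
  · fin_cases t <;> simp [Equiv.swap_apply_of_ne_of_ne, hj]

lemma PreservesCard.of_syncI_cons (h : PreservesCard (conf n p b) (syncI n :: u)) :
    p = 0 ∧ PreservesCard (conf n p b) u :=
  h.of_cons (fun hp => ⟨(0, p), by simp, by simp [syncI, hp]⟩) fun hp =>
    pApply_eq_self fun q hq => by subst hp; aesop (add simp syncI)

lemma PreservesCard.of_offI_cons (h : PreservesCard (conf n p b) (offI n :: u)) :
    p ≠ 0 ∧ PreservesCard (conf n p b) u :=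
  h.of_cons (fun hp => ⟨(0, p), by simp, by simp_all [offI, dCell]⟩) fun hp =>
    pApply_eq_self fun q hq => by aesop (add simp [offI, dCell])

lemma PreservesCard.of_eqz_cons (h : PreservesCard (conf n p b) (eqz n :: u)) :
    b 0 = false ∧ PreservesCard (conf n p b) u :=
  h.of_cons (fun hb => ⟨(1, 0), by simp_all, by simp [eqz, cCell]⟩) fun hb =>
    pApply_eq_self fun q hq => by aesop (add simp [eqz, cCell])

lemma PreservesCard.of_rotr_cons (h : PreservesCard (conf n p b) (rotr n :: u)) :
    PreservesCard (conf n (p - 1) (fun i => b (i + 1))) u :=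
  pApply_rotr_conf (n := n) ▸ (preservesCard_cons_iff.1 h).2

lemma PreservesCard.of_setBit_cons {β : Bool} (h : PreservesCard (conf n p b) (setBit n β :: u)) :
    b 0 = !β ∧ PreservesCard (conf n p (Function.update b 0 β)) u := by
  refine h.of_cons ?_ fun hb => ?_
  · intro hb
    cases β
    · exact ⟨(2, 0), by simp_all, by simp [setBit, decI, cCell, cbarCell]⟩
    · exact ⟨(1, 0), by simp_all, by simp [setBit, incI, cCell, cbarCell]⟩
  · rw [pApply_eq_image (g := Equiv.swap (1, 0) (2, 0)), image_swap_conf, hb, Bool.not_not]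
    rintro ⟨t, j⟩ hq
    by_cases hj : j = 0
    · subst hj
      cases β <;> fin_cases t <;>
        simp_all [setBit, incI, decI, cCell, cbarCell, Equiv.swap_apply_def]
    · cases β <;> simp [setBit, incI, decI, cCell, cbarCell, hj, Equiv.swap_apply_of_ne_of_ne]

lemma PreservesCard.of_clearBit_cons {e : PTrans (Fin 3 × Fin n)} (he : e = eqz n ∨ e = decI n)
    (h : PreservesCard (conf n p b) (e :: u)) :
    e = (if b 0 then decI n else eqz n) ∧
      PreservesCard (conf n p (Function.update b 0 false)) u := by
  rcases he with rfl | rfl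
  · obtain ⟨hb, h⟩ := h.of_eqz_cons
    rw [Function.update_eq_self_iff.2 hb.symm]
    simp [hb, h]
  · obtain ⟨hb, h⟩ := h.of_setBit_cons (β := false)
    simp_all

lemma PreservesCard.eq_val_of_offRotrTail {m : ℕ}
    (h : PreservesCard (conf n p b) (offRotrTail n m)) : m = p.val := by
  induction m generalizing p b with
  | zero => simp [h.of_syncI_cons.1]
  | succ m ih =>
    obtain ⟨hp, h⟩ := h.of_offI_cons
    rw [ih h.of_rotr_cons, Fin.val_sub_one_of_ne_zero hp]
    have := Fin.pos_iff_ne_zero.2 hp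
    omega

lemma PreservesCard.eq_of_setBitTail {β : Bool} {k₁ m₁ k₂ m₂ : ℕ}
    (h₁ : PreservesCard (conf n p b) (setBitTail n β k₁ m₁))
    (h₂ : PreservesCard (conf n p b) (setBitTail n β k₂ m₂)) : k₁ = k₂ ∧ m₁ = m₂ := by
  induction k₁ generalizing p b k₂ with
  | zero =>
    obtain ⟨hb₁, h₁⟩ := h₁.of_setBit_cons
    cases k₂ with
    | zero =>
      obtain ⟨-, h₂⟩ := h₂.of_setBit_cons
      exact ⟨rfl, h₁.eq_val_of_offRotrTail.trans h₂.eq_val_of_offRotrTail.symm⟩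
    | succ k₂ =>
      have hb₂ := h₂.of_setBit_cons.1
      cases β <;> simp_all
  | succ k₁ ih =>
    obtain ⟨hb₁, h₁⟩ := h₁.of_setBit_cons
    cases k₂ with
    | zero =>
      have hb₂ := h₂.of_setBit_cons.1
      cases β <;> simp_all
    | succ k₂ =>
      obtain ⟨-, h₂⟩ := h₂.of_setBit_cons
      obtain ⟨hk, hm⟩ := ih h₁.of_rotr_cons.of_offI_cons.2 h₂.of_rotr_cons.of_offI_cons.2
      exact ⟨congrArg Nat.succ hk, hm⟩

lemma PreservesCard.eq_of_resetTail {bs₁ bs₂ : List (PTrans (Fin 3 × Fin n))}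
    {e₁ e₂ : PTrans (Fin 3 × Fin n)}
    (hbs₁ : ∀ x ∈ bs₁, x = eqz n ∨ x = decI n) (he₁ : e₁ = eqz n ∨ e₁ = decI n)
    (hbs₂ : ∀ x ∈ bs₂, x = eqz n ∨ x = decI n) (he₂ : e₂ = eqz n ∨ e₂ = decI n)
    (h₁ : PreservesCard (conf n p b) (resetTail n bs₁ e₁))
    (h₂ : PreservesCard (conf n p b) (resetTail n bs₂ e₂)) : bs₁ = bs₂ ∧ e₁ = e₂ := by
  induction bs₁ generalizing p b bs₂ with
  | nil =>
    obtain ⟨he₁, h₁⟩ := h₁.of_clearBit_cons he₁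
    cases bs₂ with
    | nil =>
      exact ⟨rfl, he₁.trans (h₂.of_clearBit_cons he₂).1.symm⟩
    | cons x bs₂ =>
      obtain ⟨-, h₂⟩ := h₂.of_clearBit_cons (hbs₂ x List.mem_cons_self)
      exact absurd h₁.of_rotr_cons.of_syncI_cons.1 h₂.of_rotr_cons.of_offI_cons.1
  | cons x bs₁ ih =>
    obtain ⟨hx, h₁⟩ := h₁.of_clearBit_cons (hbs₁ x List.mem_cons_self)
    cases bs₂ with
    | nil =>
      obtain ⟨-, h₂⟩ := h₂.of_clearBit_cons he₂
      exact absurd h₂.of_rotr_cons.of_syncI_cons.1 h₁.of_rotr_cons.of_offI_cons.1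
    | cons y bs₂ =>
      obtain ⟨hy, h₂⟩ := h₂.of_clearBit_cons (hbs₂ y List.mem_cons_self)
      obtain ⟨hbs, he⟩ := ih (fun z hz => hbs₁ z (List.mem_cons_of_mem x hz))
        (fun z hz => hbs₂ z (List.mem_cons_of_mem y hz)) h₁.of_rotr_cons.of_offI_cons.2
        h₂.of_rotr_cons.of_offI_cons.2
      exact ⟨by rw [hx, hy, hbs], he⟩

lemma PreservesCard.eq_of_memLreset {u₁ u₂ : List (PTrans (Fin 3 × Fin n))}
    (hu₁ : memLreset n u₁) (hu₂ : memLreset n u₂)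
    (h₁ : PreservesCard (conf n p b) u₁) (h₂ : PreservesCard (conf n p b) u₂) : u₁ = u₂ := by
  obtain ⟨bs₁, e₁, hbs₁, he₁, rfl⟩ := hu₁
  obtain ⟨bs₂, e₂, hbs₂, he₂, rfl⟩ := hu₂
  obtain ⟨rfl, rfl⟩ := PreservesCard.eq_of_resetTail hbs₁ he₁ hbs₂ he₂
    (h₁.of_syncI_cons (u := resetTail n bs₁ e₁)).2 (h₂.of_syncI_cons (u := resetTail n bs₂ e₂)).2
  rfl

lemma PreservesCard.eq_of_memLinc {u₁ u₂ : List (PTrans (Fin 3 × Fin n))}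
    (hu₁ : memLinc n u₁) (hu₂ : memLinc n u₂)
    (h₁ : PreservesCard (conf n p b) u₁) (h₂ : PreservesCard (conf n p b) u₂) : u₁ = u₂ := by
  obtain ⟨k₁, m₁, rfl⟩ := hu₁
  obtain ⟨k₂, m₂, rfl⟩ := hu₂
  obtain ⟨rfl, rfl⟩ := PreservesCard.eq_of_setBitTail
    (h₁.of_syncI_cons (u := setBitTail n true k₁ m₁)).2
    (h₂.of_syncI_cons (u := setBitTail n true k₂ m₂)).2
  rfl

lemma PreservesCard.eq_of_memLdec {u₁ u₂ : List (PTrans (Fin 3 × Fin n))}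
    (hu₁ : memLdec n u₁) (hu₂ : memLdec n u₂)
    (h₁ : PreservesCard (conf n p b) u₁) (h₂ : PreservesCard (conf n p b) u₂) : u₁ = u₂ := by
  obtain ⟨k₁, m₁, rfl⟩ := hu₁
  obtain ⟨k₂, m₂, rfl⟩ := hu₂
  obtain ⟨rfl, rfl⟩ := PreservesCard.eq_of_setBitTail
    (h₁.of_syncI_cons (u := setBitTail n false k₁ m₁)).2
    (h₂.of_syncI_cons (u := setBitTail n false k₂ m₂)).2
  rfl

end Counter

/-- The languages `L_reset`, `L_inc` and `L_dec` of an `n`-bit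
binary counter are deterministic on every valid configuration `R`: any two words
of the language which preserve the cardinality of `R` are equal. -/
theorem counter_languages_deterministic
    (R : Set (Fin 3 × Fin n)) (hR : ValidConf n R) :
    (∀ u₁ u₂ : List (PTrans (Fin 3 × Fin n)), memLreset n u₁ → memLreset n u₂ →
      (wordApply R u₁).ncard = R.ncard → (wordApply R u₂).ncard = R.ncard → u₁ = u₂) ∧
    (∀ u₁ u₂ : List (PTrans (Fin 3 × Fin n)), memLinc n u₁ → memLinc n u₂ →
      (wordApply R u₁).ncard = R.ncard → (wordApply R u₂).ncard = R.ncard → u₁ = u₂) ∧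
    (∀ u₁ u₂ : List (PTrans (Fin 3 × Fin n)), memLdec n u₁ → memLdec n u₂ →
      (wordApply R u₁).ncard = R.ncard → (wordApply R u₂).ncard = R.ncard → u₁ = u₂) := by
  obtain ⟨p, b, rfl⟩ := exists_conf_eq hR
  exact ⟨fun _ _ => PreservesCard.eq_of_memLreset, fun _ _ => PreservesCard.eq_of_memLinc,
    fun _ _ => PreservesCard.eq_of_memLdec⟩
end
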